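/- arXiv:2505.13166 — 3 statements merged into one kernel-verified Lean document; each statement's English description precedes it below -/
import Mathlib

section
/- Let g ≥ 1 be a natural number and R an integer such that m := R + g - 1 ≥ 0. Then Σ_{l=0}^{g} T_l = (-1)^m · C(2g-2, m), where T_l = (-1)^l · C(g, l) · binom(R - l, m - l) when l ≤ m and T_l = 0 when l > m; here C denotes the ordinary binomial coefficient and binom the generalized binomial coefficient (whose upper entry R - l may be negative). -/
lemma mc_aux (n k : ℕ) : Ring.multichoose (-(n:ℤ)) k = (-1)^k * (n.choose k : ℤ) := by
  cases n with
  | zero =>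
    cases k with
    | zero => simp
    | succ k => simp [Ring.multichoose_zero_succ, Nat.choose_zero_succ]
  | succ n =>
    change Int.multichoose (-((n+1:ℕ):ℤ)) k = _
    rw [show (-((n+1:ℕ):ℤ)) = Int.negSucc n by simp [Int.negSucc_eq]]
    rfl

lemma rc_aux (n k : ℕ) : Ring.choose ((k:ℤ) - n - 1) k = (-1)^k * (n.choose k : ℤ) := by
  unfold Ring.choose
  rw [show ((k:ℤ) - n - 1 - k + 1) = -n by ring]
  exact mc_aux n k


/-- The final combinatorial identity in the proof of Theorem 1.1: for `g ≥ 1` and an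
integer `R` with `m = R + g - 1 ≥ 0`,
`Σ_{l=0}^{g} (-1)^l C(g,l) binom(R-l, m-l) = (-1)^m C(2g-2, m)`,
where terms with `l > m` are zero. -/
theorem euler_char_identity (g : ℕ) (hg : 1 ≤ g) (R : ℤ) (m : ℕ)
    (hm : (m : ℤ) = R + g - 1) :
    ∑ l ∈ Finset.range (g + 1),
        (if l ≤ m then (-1 : ℤ) ^ l * (g.choose l : ℤ) * Ring.choose (R - l) (m - l) else 0)
      = (-1) ^ m * ((2 * g - 2).choose m : ℤ) := by
  obtain _ | _ | n := g
  · omega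
  · -- g = 1
    have hR : R = (m : ℤ) := by push_cast at hm; omega
    subst hR
    rw [Finset.sum_range_succ, Finset.sum_range_one]
    cases m with
    | zero =>
      norm_num [Ring.choose_zero_right]
    | succ m =>
      rw [if_pos (by omega), if_pos (by omega)]
      simp only [pow_zero, Nat.choose_self, Nat.cast_one, one_mul, pow_one, Nat.sub_zero, Nat.cast_zero,
        sub_zero]
      rw [show ((m+1:ℕ):ℤ) - 1 = ((m:ℕ):ℤ) by push_cast; ring,
        show m + 1 - 1 = m from rfl, Ring.choose_natCast, Ring.choose_natCast]
      simp [Nat.choose_self, Nat.choose_eq_zero_of_lt]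
  · -- g = n + 2
    have hterm : ∀ l ∈ Finset.range (n + 2 + 1),
        (if l ≤ m then (-1 : ℤ) ^ l * ((n+2).choose l : ℤ) * Ring.choose (R - l) (m - l) else 0)
          = (-1)^m * (((if l ≤ m then (n+2).choose l * n.choose (m-l) else 0) : ℕ) : ℤ) := by
      intro l _
      by_cases hl : l ≤ m
      · rw [if_pos hl, if_pos hl]
        have h1 : R - l = (((m - l : ℕ)) : ℤ) - n - 1 := by push_cast [hl] at hm ⊢; omega
        rw [h1, rc_aux n (m - l)]
        have hs : ((-1:ℤ))^l * (-1)^(m-l) = (-1)^m := by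
          rw [← pow_add, Nat.add_sub_cancel' hl]
        push_cast
        linear_combination (((n+2).choose l : ℤ) * (n.choose (m-l) : ℤ)) * hs
      · simp [hl]
    rw [Finset.sum_congr rfl hterm, ← Finset.mul_sum, ← Nat.cast_sum]
    congr 2
    calc ∑ l ∈ Finset.range (n+2+1), (if l ≤ m then (n+2).choose l * n.choose (m-l) else 0)
        = ∑ l ∈ Finset.range (n+2+m+1), (if l ≤ m then (n+2).choose l * n.choose (m-l) else 0) := by
          apply Finset.sum_subset
          · intro x hx; simp only [Finset.mem_range] at *; omega
          · intro x hx hnx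
            simp only [Finset.mem_range, not_lt] at hnx
            have : (n+2).choose x = 0 := Nat.choose_eq_zero_of_lt (by omega)
            simp [this]
      _ = ∑ l ∈ Finset.range (m+1), (if l ≤ m then (n+2).choose l * n.choose (m-l) else 0) := by
          symm
          apply Finset.sum_subset
          · intro x hx; simp only [Finset.mem_range] at *; omega
          · intro x hx hnx
            simp only [Finset.mem_range, not_lt] at hnx
            rw [if_neg (by omega)]
      _ = ∑ l ∈ Finset.range (m+1), (n+2).choose l * n.choose (m-l) := by
          apply Finset.sum_congr rfl
          intro x hx
          rw [if_pos (by simp only [Finset.mem_range] at hx; omega)]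
      _ = ((n+2)+n).choose m := by
          rw [Nat.add_choose_eq, Finset.Nat.sum_antidiagonal_eq_sum_range_succ_mk]
      _ = (2*(n+2)-2).choose m := by congr 1; omega
end

section
/- Let g ≥ 1 and m be natural numbers with m ≥ 2g - 1. Then -2 · Σ_{j=0}^{m-1} (-1)^{m-j} Λ(g, j) = Σ_{j=0}^{m-g} T_j, where T_j = C(2g, m - 2j) when 2j ≤ m and T_j = 0 when 2j > m, and C(2g, k) denotes the ordinary binomial coefficient. -/
/-- `Λ(g, n) = C(2g, n) + C(2g, n-2) + ⋯`, ending at `C(2g, 0)` or `C(2g, 1)`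
according to the parity of `n`. -/
def Lam (g n : ℕ) : ℕ := ∑ j ∈ Finset.range (n / 2 + 1), (2 * g).choose (n - 2 * j)

lemma Lam_add_two (g n : ℕ) : Lam g (n + 2) = (2 * g).choose (n + 2) + Lam g n := by
  unfold Lam
  rw [show (n + 2) / 2 + 1 = (n / 2 + 1) + 1 by omega, Finset.sum_range_succ']
  have h : ∀ j ∈ Finset.range (n / 2 + 1),
      (2 * g).choose (n + 2 - 2 * (j + 1)) = (2 * g).choose (n - 2 * j) := by
    intro j _
    congr 1
    omega
  rw [Finset.sum_congr rfl h]
  simp [add_comm]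

lemma Lam_eq_sum (g n : ℕ) (hg : 1 ≤ g) :
    Lam g n = ∑ k ∈ Finset.range (n + 1), (2 * g - 1).choose k := by
  induction n using Nat.twoStepInduction with
  | zero => simp [Lam]
  | one =>
      have h1 : Lam g 1 = 2 * g := by simp [Lam]
      rw [h1, Finset.sum_range_succ, Finset.sum_range_succ, Finset.sum_range_zero,
        Nat.choose_zero_right, Nat.choose_one_right]
      omega
  | more n ih _ =>
      rw [Lam_add_two, ih, Finset.sum_range_succ (n := n + 2), Finset.sum_range_succ (n := n + 1)]
      have h1 : 2 * g = (2 * g - 1) + 1 := by omega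
      have h2 : 2 * g - 1 = (2 * g - 1 - 1) + 1 := by omega
      have hp : (2 * g).choose (n + 2) = (2 * g - 1).choose (n + 1) + (2 * g - 1).choose (n + 2) := by
        rw [h1, Nat.choose_succ_succ]
        simp
      omega

lemma key_identity (g : ℕ) (hg : 1 ≤ g) (m : ℕ) :
    (Lam g m : ℤ) + 2 * ∑ j ∈ Finset.range m, (-1 : ℤ) ^ (m - j) * (Lam g j : ℤ)
      = ((2 * g - 2).choose m : ℤ) := by
  induction m with
  | zero => simp [Lam]
  | succ m ih =>
      have hA : ∑ j ∈ Finset.range (m + 1), (-1 : ℤ) ^ (m + 1 - j) * (Lam g j : ℤ)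
          = -(Lam g m : ℤ) - ∑ j ∈ Finset.range m, (-1 : ℤ) ^ (m - j) * (Lam g j : ℤ) := by
        rw [Finset.sum_range_succ]
        have hc : ∀ j ∈ Finset.range m,
            (-1 : ℤ) ^ (m + 1 - j) * (Lam g j : ℤ)
              = -((-1 : ℤ) ^ (m - j) * (Lam g j : ℤ)) := by
          intro j hj
          have hjm : j < m := Finset.mem_range.mp hj
          rw [show m + 1 - j = (m - j) + 1 by omega, pow_succ]
          ring
        rw [Finset.sum_congr rfl hc, Finset.sum_neg_distrib,
          show m + 1 - m = 1 by omega]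
        ring
      have hL : (Lam g (m + 1) : ℤ) = (Lam g m : ℤ) + ((2 * g - 1).choose (m + 1) : ℤ) := by
        rw [Lam_eq_sum g (m + 1) hg, Lam_eq_sum g m hg, Finset.sum_range_succ (n := m + 1)]
        push_cast
        ring
      have hP : ((2 * g - 2).choose (m + 1) : ℤ) + ((2 * g - 2).choose m : ℤ)
          = ((2 * g - 1).choose (m + 1) : ℤ) := by
        have h2 : 2 * g - 1 = (2 * g - 2) + 1 := by omega
        rw [h2, Nat.choose_succ_succ]
        push_cast
        ring
      rw [hA, hL]
      linarith

/-- For `g ≥ 1` and `m ≥ 2g - 1`, the middle Betti number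
`-2 Σ_{j=0}^{m-1} (-1)^{m-j} Λ(g, j)` equals `Σ_{j=0}^{m-g} C(2g, m - 2j)`
(where terms with `2j > m` are zero). -/
theorem middle_betti_projective_bundle (g m : ℕ) (hg : 1 ≤ g) (hm : 2 * g - 1 ≤ m) :
    -2 * ∑ j ∈ Finset.range m, (-1 : ℤ) ^ (m - j) * (Lam g j : ℤ)
      = ∑ j ∈ Finset.range (m - g + 1),
          (if 2 * j ≤ m then ((2 * g).choose (m - 2 * j) : ℤ) else 0) := by
  have h := key_identity g hg m
  have h0 : ((2 * g - 2).choose m : ℤ) = 0 := by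
    rw [Nat.choose_eq_zero_of_lt (by omega)]
    simp
  rw [h0] at h
  have hsub : Finset.range (m / 2 + 1) ⊆ Finset.range (m - g + 1) := by
    apply Finset.range_subset_range.mpr
    omega
  have hRHS : ∑ j ∈ Finset.range (m - g + 1),
      (if 2 * j ≤ m then ((2 * g).choose (m - 2 * j) : ℤ) else 0) = (Lam g m : ℤ) := by
    rw [← Finset.sum_subset hsub (by
      intro x _ hx
      rw [if_neg]
      simp only [Finset.mem_range, not_lt] at hx
      omega)]
    have : ∀ j ∈ Finset.range (m / 2 + 1),
        (if 2 * j ≤ m then ((2 * g).choose (m - 2 * j) : ℤ) else 0)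
          = ((2 * g).choose (m - 2 * j) : ℤ) := by
      intro j hj
      rw [if_pos]
      have := Finset.mem_range.mp hj
      omega
    rw [Finset.sum_congr rfl this]
    simp [Lam]
  rw [hRHS]
  linarith
end

section
/- Let A be a commutative ring, x ∈ A, and let R, K, n be natural numbers with n ≤ R. Let c : ℕ → A be a function with c(0) = 1. Then (Σ_{k=0}^{R} Σ_{l=0}^{min(k,n)} C(R - l, k - l) x^{k-l} c(l)) · (Σ_{j=0}^{K} C(K, j) x^{j}) = Σ_{k=0}^{R+K} Σ_{l=0}^{min(k,n)} C(R + K - l, k - l) x^{k-l} c(l), where C denotes the ordinary binomial coefficient. -/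
open Finset

lemma key (A : Type*) [CommRing A] (x : A) (R n : ℕ) (hn : n ≤ R) (c : ℕ → A) :
    ∑ k ∈ range (R + 1), ∑ l ∈ range (min k n + 1),
        ((R - l).choose (k - l) : A) * x ^ (k - l) * c l
      = ∑ l ∈ range (n + 1), c l * (x + 1) ^ (R - l) := by
  have h1 : ∀ k ∈ range (R + 1),
      ∑ l ∈ range (min k n + 1), ((R - l).choose (k - l) : A) * x ^ (k - l) * c l
        = ∑ l ∈ range (n + 1), if l ≤ k then ((R - l).choose (k - l) : A) * x ^ (k - l) * c l else 0 := by
    intro k _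
    have hsub : range (min k n + 1) ⊆ range (n + 1) := Finset.range_subset_range.2 (by omega)
    have hv : ∀ l ∈ range (n + 1), l ∉ range (min k n + 1) →
        (if l ≤ k then ((R - l).choose (k - l) : A) * x ^ (k - l) * c l else 0) = 0 := by
      intro l hl hl2
      simp only [mem_range] at hl hl2
      rw [if_neg (by omega)]
    rw [← Finset.sum_subset hsub hv]
    apply Finset.sum_congr rfl
    intro l hl
    simp only [mem_range] at hl
    rw [if_pos (by omega)]
  rw [Finset.sum_congr rfl h1, Finset.sum_comm]
  apply Finset.sum_congr rfl
  intro l hl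
  simp only [mem_range] at hl
  rw [← Finset.sum_filter]
  have hfil : (range (R + 1)).filter (fun k => l ≤ k) = Ico l (R + 1) := by
    ext k; simp [Nat.lt_succ_iff]; omega
  rw [hfil, Finset.sum_Ico_eq_sum_range]
  have h2 : R + 1 - l = (R - l) + 1 := by omega
  rw [h2, add_pow, Finset.mul_sum]
  apply Finset.sum_congr rfl
  intro m hm
  have : l + m - l = m := by omega
  rw [this]
  ring

/-- The Whitney product formula identity from the computation of the Chern classes of
the twisted index bundle: for `c : ℕ → A` with `c 0 = 1` and `n ≤ R`,
`(Σ_{k=0}^{R} Σ_{l=0}^{min(k,n)} C(R-l, k-l) x^{k-l} c l) · (Σ_{j=0}^{K} C(K,j) x^j)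
  = Σ_{k=0}^{R+K} Σ_{l=0}^{min(k,n)} C(R+K-l, k-l) x^{k-l} c l`. -/
theorem whitney_product_identity (A : Type*) [CommRing A] (x : A) (R K n : ℕ)
    (hn : n ≤ R) (c : ℕ → A) (hc : c 0 = 1) :
    (∑ k ∈ Finset.range (R + 1), ∑ l ∈ Finset.range (min k n + 1),
          ((R - l).choose (k - l) : A) * x ^ (k - l) * c l) *
        (∑ j ∈ Finset.range (K + 1), (K.choose j : A) * x ^ j)
      = ∑ k ∈ Finset.range (R + K + 1), ∑ l ∈ Finset.range (min k n + 1),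
          ((R + K - l).choose (k - l) : A) * x ^ (k - l) * c l := by
  have hK : ∑ j ∈ Finset.range (K + 1), (K.choose j : A) * x ^ j = (x + 1) ^ K := by
    rw [add_pow]
    apply Finset.sum_congr rfl
    intro j hj
    simp [mul_comm]
  rw [key A x R n hn c, key A x (R + K) n (by omega) c, hK, Finset.sum_mul]
  apply Finset.sum_congr rfl
  intro l hl
  simp only [Finset.mem_range] at hl
  rw [mul_assoc, ← pow_add]
  congr 2
  omega
end
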